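/- Let n ≥ 1 and let A, B : V → End(V) be two linear maps, each with Ω(A(X)Y,Z) (resp. Ω(B(X)Y,Z)) totally symmetric and A(X)∘A(Y) = 0, B(X)∘B(Y) = 0 for all X,Y (so ∇^A = ∇⁰ + A and ∇^B = ∇⁰ + B are two flat translation-invariant symplectic connections of Ricci type on (ℝ^{2n},Ω)). Define ψ := ψ^B ∘ ψ^{−A}, where ψ^C(x) = x − ½·C(x)x. Then ψ is a smooth bijection of V, its derivative is symplectic at every point (Ω(Dψ(x)X, Dψ(x)Y) = Ω(X,Y) for all x,X,Y), and ψ carries ∇^A to ∇^B: for all x,X,Y, D²ψ(x)(X,Y) + B(Dψ(x)X)(Dψ(x)Y) = Dψ(x)(A(X)Y). In particular, any two flat translation-invariant symplectic connections of Ricci type on (ℝ^{2n},Ω) are conjugate under a symplectomorphism. -/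

import Mathlib

/-!
Total symmetry of `Ω(C X ·, ·)` and nondegeneracy of `Ω` make `C` symmetric, so
`Dψ^C(x) = 1 - C x` and `D²ψ^C = -C`. With `C ∘ C = 0` this shows that `ψ^{-C}` inverts `ψ^C`,
that `1 - C x` is symplectic, and that `ψ^C` carries `∇^{-C}` to `∇⁰` and `∇⁰` to `∇^C`.
So `ψ^{-A}` flattens `∇^A` and `ψ^B` carries `∇⁰` to `∇^B`; the chain rule for second
derivatives shows that carrying connections is compatible with composition.
-/

noncomputable section

/-- The standard symplectic form on `ℝ^{2n}`. -/
def Omega (n : ℕ) (x y : Fin (2*n) → ℝ) : ℝ :=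
  ∑ i : Fin n, (x ⟨i.1, by have := i.isLt; omega⟩ * y ⟨n + i.1, by have := i.isLt; omega⟩
    - x ⟨n + i.1, by have := i.isLt; omega⟩ * y ⟨i.1, by have := i.isLt; omega⟩)

/-- The map `ψ^C(x) = x − ½·C(x)x` associated to a linear `C : V → End(V)`. -/
def psiMap (n : ℕ)
    (C : (Fin (2*n) → ℝ) →ₗ[ℝ] (Fin (2*n) → ℝ) →ₗ[ℝ] (Fin (2*n) → ℝ))
    (x : Fin (2*n) → ℝ) : Fin (2*n) → ℝ :=
  x - (1/2 : ℝ) • C x x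

open Function

section BilinForm

variable {R M : Type*} [CommRing R] [AddCommGroup M] [Module R M] {ω : LinearMap.BilinForm R M}

theorem LinearMap.SeparatingLeft.eq_of_forall_apply_eq (hω : ω.SeparatingLeft) {x y : M}
    (h : ∀ z, ω x z = ω y z) : x = y :=
  sub_eq_zero.mp (hω _ fun z => by simp [h])

theorem LinearMap.IsOrthogonal.comp {f g : M → M} (hf : ω.IsOrthogonal f)
    (hg : ω.IsOrthogonal g) : ω.IsOrthogonal (f ∘ g) :=
  fun x y => (hf _ _).trans (hg x y)

theorem LinearMap.BilinForm.IsAlt.isOrthogonal_sub_self (hω : ω.IsAlt) {T : M → M}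
    (hT : ∀ u v, ω (T u) v = ω (T v) u) (hT2 : ∀ v, T (T v) = 0) :
    ω.IsOrthogonal (fun v => v - T v) := by
  intro u v
  have hTT : ω (T u) (T v) = 0 := by rw [hT, hT2, map_zero, LinearMap.zero_apply]
  have hskew : ω u (T v) = - ω (T u) v := by rw [hT]; exact (LinearMap.IsAlt.neg hω _ _).symm
  simp only [map_sub, LinearMap.sub_apply, hTT, hskew]
  ring

end BilinForm

section StandardSymplecticForm

variable {n : ℕ}

def omegaForm (n : ℕ) : LinearMap.BilinForm ℝ (Fin (2*n) → ℝ) :=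
  LinearMap.mk₂ ℝ (Omega n)
    (fun _ _ _ => by simp only [Omega, ← Finset.sum_add_distrib, Pi.add_apply]; congr! 1; ring)
    (fun _ _ _ => by simp only [Omega, Finset.mul_sum, Pi.smul_apply, smul_eq_mul]; congr! 1; ring)
    (fun _ _ _ => by simp only [Omega, ← Finset.sum_add_distrib, Pi.add_apply]; congr! 1; ring)
    (fun _ _ _ => by simp only [Omega, Finset.mul_sum, Pi.smul_apply, smul_eq_mul]; congr! 1; ring)

theorem omegaForm_apply (x y : Fin (2*n) → ℝ) : omegaForm n x y = Omega n x y := rfl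

theorem omegaForm_isAlt : (omegaForm n).IsAlt := fun x => by
  simp [omegaForm_apply, Omega, mul_comm]

theorem Omega_single_high (v : Fin (2*n) → ℝ) (j : Fin n) :
    Omega n v (Pi.single ⟨n + j, by omega⟩ 1) = v ⟨j, by omega⟩ := by
  rw [Omega, Finset.sum_eq_single j]
  · simp [Fin.ext_iff, j.pos.ne']
  · intro i _ hij
    simp [Pi.single_apply, Fin.ext_iff, Fin.val_ne_of_ne hij]; omega
  · simp

theorem Omega_single_low (v : Fin (2*n) → ℝ) (j : Fin n) :
    Omega n v (Pi.single ⟨j, by omega⟩ 1) = - v ⟨n + j, by omega⟩ := by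
  rw [Omega, Finset.sum_eq_single j]
  · simp [Fin.ext_iff, j.pos.ne']
  · intro i _ hij
    simp [Pi.single_apply, Fin.ext_iff, Fin.val_ne_of_ne hij]; omega
  · simp

theorem omegaForm_separatingLeft : (omegaForm n).SeparatingLeft := by
  intro v hv
  funext k
  rcases lt_or_ge (k : ℕ) n with hk | hk
  · simpa using (Omega_single_high v ⟨k, hk⟩).symm.trans (hv _)
  · have hk_eq : (⟨n + (k - n), by omega⟩ : Fin (2*n)) = k := Fin.ext (by simp; omega)
    simpa [hk_eq] using (Omega_single_low v ⟨k - n, by omega⟩).symm.trans (hv _)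

end StandardSymplecticForm

section SecondDerivative

variable {E F G : Type*} [NormedAddCommGroup E] [NormedSpace ℝ E] [NormedAddCommGroup F]
  [NormedSpace ℝ F] [NormedAddCommGroup G] [NormedSpace ℝ G]

theorem fderiv_fderiv_comp_apply {g : F → G} {f : E → F} (hg : ContDiff ℝ 2 g)
    (hf : ContDiff ℝ 2 f) (x X Y : E) :
    fderiv ℝ (fderiv ℝ (g ∘ f)) x X Y =
      fderiv ℝ (fderiv ℝ g) (f x) (fderiv ℝ f x X) (fderiv ℝ f x Y)
        + fderiv ℝ g (f x) (fderiv ℝ (fderiv ℝ f) x X Y) := by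
  have hg1 : Differentiable ℝ g := hg.differentiable (by norm_num)
  have hf1 : Differentiable ℝ f := hf.differentiable (by norm_num)
  have hDg : Differentiable ℝ (fderiv ℝ g) :=
    (hg.fderiv_right (m := 1) (by norm_num)).differentiable (by norm_num)
  have hDf : Differentiable ℝ (fderiv ℝ f) :=
    (hf.fderiv_right (m := 1) (by norm_num)).differentiable (by norm_num)
  have hchain : fderiv ℝ (g ∘ f) = fun y => (fderiv ℝ g (f y)).comp (fderiv ℝ f y) :=
    funext fun y => fderiv_comp y (hg1 _) (hf1 y)
  have hD : HasFDerivAt (fun y => (fderiv ℝ g (f y)).comp (fderiv ℝ f y)) _ x :=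
    ((hDg (f x)).hasFDerivAt.comp x (hf1 x).hasFDerivAt).clm_comp (hDf x).hasFDerivAt
  rw [hchain, hD.fderiv]
  simp [add_comm]

end SecondDerivative

section Psi

open ContinuousLinearMap

variable {E : Type*} [NormedAddCommGroup E] [NormedSpace ℝ E] (C : E →L[ℝ] E →L[ℝ] E)

def psiCLM (x : E) : E := x - (1/2 : ℝ) • C x x

variable {C}

theorem hasFDerivAt_psiCLM (hC : ∀ X Y, C X Y = C Y X) (x : E) :
    HasFDerivAt (psiCLM C) (ContinuousLinearMap.id ℝ E - C x) x := by
  have hquad : HasFDerivAt (fun y => C y y)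
      ((C x).comp (ContinuousLinearMap.id ℝ E) + (C.flip x).comp (ContinuousLinearMap.id ℝ E)) x :=
    C.hasFDerivAt_of_bilinear (hasFDerivAt_id x) (hasFDerivAt_id x)
  have h : HasFDerivAt (psiCLM C) (ContinuousLinearMap.id ℝ E - (1/2 : ℝ) • _) x :=
    (hasFDerivAt_id x).sub (hquad.const_smul (1/2 : ℝ))
  refine h.congr_fderiv ?_
  ext Y
  simp only [sub_apply, coe_id', id_eq, smul_apply, add_apply, coe_comp, comp_apply, flip_apply,
    hC Y x]
  module

theorem fderiv_psiCLM (hC : ∀ X Y, C X Y = C Y X) :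
    fderiv ℝ (psiCLM C) = fun x => ContinuousLinearMap.id ℝ E - C x :=
  funext fun x => (hasFDerivAt_psiCLM hC x).fderiv

variable (C) in
theorem contDiff_psiCLM {k : WithTop ℕ∞} : ContDiff ℝ k (psiCLM C) :=
  contDiff_id.sub
    ((C.isBoundedBilinearMap.contDiff.comp (contDiff_id.prodMk contDiff_id)).const_smul _)

theorem fderiv_fderiv_psiCLM_apply (hC : ∀ X Y, C X Y = C Y X) (x X Y : E) :
    fderiv ℝ (fderiv ℝ (psiCLM C)) x X Y = - C X Y := by
  have hD : HasFDerivAt (fun y => ContinuousLinearMap.id ℝ E - C y) (0 - C) x :=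
    (hasFDerivAt_const _ x).sub C.hasFDerivAt
  rw [fderiv_psiCLM hC, hD.fderiv]
  simp

theorem psiCLM_neg_psiCLM (hC : ∀ X Y, C X Y = C Y X) (hnil : ∀ X Y Z, C X (C Y Z) = 0)
    (x : E) : psiCLM (-C) (psiCLM C x) = x := by
  have hnil' : C (C x x) x = 0 := by rw [hC]; exact hnil x x x
  simp only [psiCLM, neg_apply, map_sub, map_smul, sub_apply, smul_apply, hnil, hnil']
  module

theorem psiCLM_bijective (hC : ∀ X Y, C X Y = C Y X) (hnil : ∀ X Y Z, C X (C Y Z) = 0) :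
    Bijective (psiCLM C) := by
  have hC' : ∀ X Y, (-C) X Y = (-C) Y X := by simp [hC]
  have hnil' : ∀ X Y Z, (-C) X ((-C) Y Z) = 0 := by simp [hnil]
  refine bijective_iff_has_inverse.mpr ⟨psiCLM (-C), psiCLM_neg_psiCLM hC hnil, fun x => ?_⟩
  simpa using psiCLM_neg_psiCLM hC' hnil' x

theorem isOrthogonal_fderiv_psiCLM {ω : LinearMap.BilinForm ℝ E} (hω : ω.IsAlt)
    (hC : ∀ X Y, C X Y = C Y X) (hCω : ∀ z u v, ω (C z u) v = ω (C z v) u)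
    (hnil : ∀ X Y Z, C X (C Y Z) = 0) (x : E) :
    ω.IsOrthogonal (fderiv ℝ (psiCLM C) x) := by
  rw [fderiv_psiCLM hC]
  exact hω.isOrthogonal_sub_self (hCω x) (hnil x x)

end Psi

section Connection

variable {E F G : Type*} [NormedAddCommGroup E] [NormedSpace ℝ E] [NormedAddCommGroup F]
  [NormedSpace ℝ F] [NormedAddCommGroup G] [NormedSpace ℝ G]

/-- `ψ · ∇^A = ∇^B`, where `∇^A = ∇⁰ + A` and `∇^B = ∇⁰ + B`. -/
def CarriesConnection (ψ : E → F) (A : E →L[ℝ] E →L[ℝ] E) (B : F →L[ℝ] F →L[ℝ] F) : Prop :=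
  ∀ x X Y, iteratedFDeriv ℝ 2 ψ x ![X, Y] + B (fderiv ℝ ψ x X) (fderiv ℝ ψ x Y)
    = fderiv ℝ ψ x (A X Y)

theorem CarriesConnection.comp {g : F → G} {f : E → F} {A : E →L[ℝ] E →L[ℝ] E}
    {M : F →L[ℝ] F →L[ℝ] F} {B : G →L[ℝ] G →L[ℝ] G} (hg : CarriesConnection g M B)
    (hf : CarriesConnection f A M) (hg2 : ContDiff ℝ 2 g) (hf2 : ContDiff ℝ 2 f) :
    CarriesConnection (g ∘ f) A B := by
  intro x X Y
  have hgx := hg (f x) (fderiv ℝ f x X) (fderiv ℝ f x Y)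
  have hfx := hf x X Y
  simp only [iteratedFDeriv_two_apply, Matrix.cons_val_zero, Matrix.cons_val_one] at hgx hfx ⊢
  rw [fderiv_fderiv_comp_apply hg2 hf2,
    fderiv_comp x (hg2.differentiable (by norm_num) _) (hf2.differentiable (by norm_num) x)]
  simp only [ContinuousLinearMap.coe_comp, Function.comp_apply]
  rw [← hfx, map_add, ← hgx]
  abel

variable {C : E →L[ℝ] E →L[ℝ] E}

theorem carriesConnection_psiCLM_neg_zero (hC : ∀ X Y, C X Y = C Y X)
    (hnil : ∀ X Y Z, C X (C Y Z) = 0) : CarriesConnection (psiCLM C) (-C) 0 := by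
  intro x X Y
  simp only [iteratedFDeriv_two_apply, Matrix.cons_val_zero, Matrix.cons_val_one,
    fderiv_fderiv_psiCLM_apply hC]
  simp [fderiv_psiCLM hC, hnil]

theorem carriesConnection_psiCLM_zero (hC : ∀ X Y, C X Y = C Y X)
    (hnil : ∀ X Y Z, C X (C Y Z) = 0) : CarriesConnection (psiCLM C) 0 C := by
  have hnil' : ∀ X Y Z, C (C X Y) Z = 0 := fun X Y Z => by rw [hC]; exact hnil Z X Y
  intro x X Y
  simp only [iteratedFDeriv_two_apply, Matrix.cons_val_zero, Matrix.cons_val_one,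
    fderiv_fderiv_psiCLM_apply hC]
  simp [fderiv_psiCLM hC, hnil, hnil']

end Connection

theorem flat_invariant_connections_conjugate_general (n : ℕ)
    (A B : (Fin (2*n) → ℝ) →ₗ[ℝ] (Fin (2*n) → ℝ) →ₗ[ℝ] (Fin (2*n) → ℝ))
    (hsymA₁ : ∀ X Y Z, Omega n (A X Y) Z = Omega n (A Y X) Z)
    (hsymA₂ : ∀ X Y Z, Omega n (A X Y) Z = Omega n (A X Z) Y)
    (hnilA : ∀ X Y Z, A X (A Y Z) = 0)
    (hsymB₁ : ∀ X Y Z, Omega n (B X Y) Z = Omega n (B Y X) Z)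
    (hsymB₂ : ∀ X Y Z, Omega n (B X Y) Z = Omega n (B X Z) Y)
    (hnilB : ∀ X Y Z, B X (B Y Z) = 0) :
    Function.Bijective (psiMap n B ∘ psiMap n (-A)) ∧
    ContDiff ℝ (⊤ : ℕ∞) (psiMap n B ∘ psiMap n (-A)) ∧
    (∀ x X Y,
      Omega n (fderiv ℝ (psiMap n B ∘ psiMap n (-A)) x X)
        (fderiv ℝ (psiMap n B ∘ psiMap n (-A)) x Y) = Omega n X Y) ∧
    (∀ x X Y,
      iteratedFDeriv ℝ 2 (psiMap n B ∘ psiMap n (-A)) x ![X, Y]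
        + B (fderiv ℝ (psiMap n B ∘ psiMap n (-A)) x X)
            (fderiv ℝ (psiMap n B ∘ psiMap n (-A)) x Y)
      = fderiv ℝ (psiMap n B ∘ psiMap n (-A)) x (A X Y)) := by
  set A' := A.toContinuousBilinearMap
  set B' := B.toContinuousBilinearMap
  have hsymmNegA : ∀ X Y, (-A') X Y = (-A') Y X := fun X Y => by
    simp [A', omegaForm_separatingLeft.eq_of_forall_apply_eq (hsymA₁ X Y)]
  have hsymmB : ∀ X Y, B' X Y = B' Y X := fun X Y =>
    omegaForm_separatingLeft.eq_of_forall_apply_eq (hsymB₁ X Y)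
  have hnilNegA : ∀ X Y Z, (-A') X ((-A') Y Z) = 0 := by simp [A', hnilA]
  have hωNegA : ∀ z u v, omegaForm n ((-A') z u) v = omegaForm n ((-A') z v) u := by
    simp [A', omegaForm_apply, hsymA₂]
  have hψ : psiMap n B ∘ psiMap n (-A) = psiCLM B' ∘ psiCLM (-A') := rfl
  have hDψ (x) : fderiv ℝ (psiCLM B' ∘ psiCLM (-A')) x
      = (fderiv ℝ (psiCLM B') (psiCLM (-A') x)).comp (fderiv ℝ (psiCLM (-A')) x) :=
    fderiv_comp x ((hasFDerivAt_psiCLM hsymmB _).differentiableAt)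
      (hasFDerivAt_psiCLM hsymmNegA x).differentiableAt
  rw [hψ]
  refine ⟨(psiCLM_bijective hsymmB hnilB).comp (psiCLM_bijective hsymmNegA hnilNegA),
    (contDiff_psiCLM B').comp (contDiff_psiCLM (-A')), fun x X Y => ?_, ?_⟩
  · rw [hDψ]
    exact ((isOrthogonal_fderiv_psiCLM omegaForm_isAlt hsymmB hsymB₂ hnilB _).comp
      (isOrthogonal_fderiv_psiCLM omegaForm_isAlt hsymmNegA hωNegA hnilNegA x)) X Y
  · have hflat := carriesConnection_psiCLM_neg_zero hsymmNegA hnilNegA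
    rw [neg_neg] at hflat
    exact (carriesConnection_psiCLM_zero hsymmB hnilB).comp hflat (contDiff_psiCLM _)
      (contDiff_psiCLM _)

/-- Any two flat translation-invariant symplectic connections of Ricci
type `∇^A`, `∇^B` on `(ℝ^{2n},Ω)` are conjugate under the symplectomorphism
`ψ = ψ^B ∘ ψ^{−A}`: `ψ` is a smooth bijection with symplectic derivative carrying
`∇^A` to `∇^B`, i.e. `D²ψ(x)(X,Y) + B(Dψ(x)X)(Dψ(x)Y) = Dψ(x)(A(X)Y)`. -/
theorem flat_invariant_connections_conjugate (n : ℕ) (hn : 1 ≤ n)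
    (A B : (Fin (2*n) → ℝ) →ₗ[ℝ] (Fin (2*n) → ℝ) →ₗ[ℝ] (Fin (2*n) → ℝ))
    (hsymA₁ : ∀ X Y Z, Omega n (A X Y) Z = Omega n (A Y X) Z)
    (hsymA₂ : ∀ X Y Z, Omega n (A X Y) Z = Omega n (A X Z) Y)
    (hnilA : ∀ X Y Z, A X (A Y Z) = 0)
    (hsymB₁ : ∀ X Y Z, Omega n (B X Y) Z = Omega n (B Y X) Z)
    (hsymB₂ : ∀ X Y Z, Omega n (B X Y) Z = Omega n (B X Z) Y)
    (hnilB : ∀ X Y Z, B X (B Y Z) = 0) :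
    Function.Bijective (psiMap n B ∘ psiMap n (-A)) ∧
    ContDiff ℝ (⊤ : ℕ∞) (psiMap n B ∘ psiMap n (-A)) ∧
    (∀ x X Y,
      Omega n (fderiv ℝ (psiMap n B ∘ psiMap n (-A)) x X)
        (fderiv ℝ (psiMap n B ∘ psiMap n (-A)) x Y) = Omega n X Y) ∧
    (∀ x X Y,
      iteratedFDeriv ℝ 2 (psiMap n B ∘ psiMap n (-A)) x ![X, Y]
        + B (fderiv ℝ (psiMap n B ∘ psiMap n (-A)) x X)
            (fderiv ℝ (psiMap n B ∘ psiMap n (-A)) x Y)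
      = fderiv ℝ (psiMap n B ∘ psiMap n (-A)) x (A X Y)) :=
  flat_invariant_connections_conjugate_general n A B hsymA₁ hsymA₂ hnilA hsymB₁ hsymB₂ hnilB
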